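/- Let K = { u ∈ L¹([0,1]) : 0 ≤ u ≤ 1 a.e. } and define T : K → K by (Tu)(t) = (u(t)/2)·∫₀ᵗ u(s) ds. Then for every n ∈ ℕ, every sequence (u_i) in K, every v ∈ K, every i, and every A ⊆ {1,…,n}: ‖∑_{k∈A} (T u_{i+k} − T v)‖₁ ≤ max_{C ⊆ {1,…,n}} ‖∑_{k∈C} (u_{i+k} − v)‖₁. In particular T is 𝔠𝔪-nonexpansive. -/

import Mathlib

open Filter MeasureTheory

/-- The `L¹`-norm on `[0,1]` of a function. -/
noncomputable def L1norm (f : ℝ → ℝ) : ℝ :=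
  ∫ t in Set.Icc (0 : ℝ) 1, |f t|

/-- The map `T u (t) = (u t / 2) · ∫₀ᵗ u`. -/
noncomputable def Tint (u : ℝ → ℝ) (t : ℝ) : ℝ :=
  u t / 2 * ∫ s in (0 : ℝ)..t, u s

/-- Supremum over all subsets `C ⊆ {1,…,n}` of the `L¹`-norm of the partial
sum. -/
noncomputable def supSubsetsL1 (n : ℕ) (g : ℕ → ℝ → ℝ) : ℝ :=
  ((Finset.Icc 1 n).powerset).sup' (Finset.powerset_nonempty _)
    (fun C => L1norm (fun t => ∑ k ∈ C, g k t))

/-!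
Write `a_k = u_{i+k} - v`. Since `w W - v V = (w - v) W + v (W - V)` for primitives `W, V` of
`w, v`, one has
`2 ∑_{k∈A} (T u_{i+k} - T v)(t) = ∫₀ᵗ ∑_{k∈A} u_{i+k}(s) a_k(t) ds + v(t) ∫₀ᵗ ∑_{k∈A} a_k`.
The second term has `L¹` norm at most `‖∑_{k∈A} a_k‖₁`. By Fubini, the first one is controlled by
the `L¹` norms of `∑_{k∈A} u_{i+k}(s) a_k` for fixed `s`; these are convex functions of the
coefficients `u_{i+k}(s) ∈ [0,1]`, hence bounded by their values `‖∑_{k∈C} a_k‖₁`, `C ⊆ A`, at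
the vertices of the cube. The limsup inequality then holds termwise.
-/

open Set

theorem ConvexOn.le_of_forall_subset_sum {E ι : Type*} [AddCommGroup E] [Module ℝ E]
    {φ : E → ℝ} (hφ : ConvexOn ℝ univ φ) (a : ι → E) {d : ι → ℝ} {X : ℝ} (A : Finset ι)
    (hd : ∀ k ∈ A, d k ∈ Icc (0 : ℝ) 1) (hX : ∀ C ⊆ A, φ (∑ k ∈ C, a k) ≤ X) :
    φ (∑ k ∈ A, d k • a k) ≤ X := by
  classical
  -- Generalizing `φ` lets the induction hypothesis apply to the translate `φ (a k + ·)`.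
  induction A using Finset.induction_on generalizing φ with
  | empty => simpa using hX ∅ (Finset.empty_subset _)
  | insert k A hk ih =>
    obtain ⟨hd0, hd1⟩ := hd k (Finset.mem_insert_self k A)
    have hdA : ∀ j ∈ A, d j ∈ Icc (0 : ℝ) 1 := fun j hj => hd j (Finset.mem_insert_of_mem hj)
    have with_k : φ (a k + ∑ j ∈ A, d j • a j) ≤ X := by
      refine ih (φ := fun x => φ (a k + x)) ?_ hdA fun C hC => ?_
      · simpa [Function.comp_def] using hφ.translate_right (a k)
      · rw [← Finset.sum_insert fun h => hk (hC h)]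
        exact hX _ (Finset.insert_subset_insert k hC)
    have without_k : φ (∑ j ∈ A, d j • a j) ≤ X :=
      ih hφ hdA fun C hC => hX C (hC.trans (Finset.subset_insert k A))
    calc φ (∑ j ∈ insert k A, d j • a j)
        = φ (d k • (a k + ∑ j ∈ A, d j • a j) + (1 - d k) • ∑ j ∈ A, d j • a j) := by
          rw [Finset.sum_insert hk]; congr 1; module
      _ ≤ d k • φ (a k + ∑ j ∈ A, d j • a j) + (1 - d k) • φ (∑ j ∈ A, d j • a j) :=
          hφ.2 trivial trivial hd0 (by linarith) (by ring)
      _ ≤ X := by simp only [smul_eq_mul]; nlinarith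

section IntegrableFunctions

variable {α : Type*} [MeasurableSpace α] (μ : Measure α)

-- `f ↦ ∫ |f|` is not convex on all of `α → ℝ`, since the integral is `0` off integrable functions.
def integrableSubmodule : Submodule ℝ (α → ℝ) where
  carrier := {f | Integrable f μ}
  add_mem' := Integrable.add
  zero_mem' := integrable_zero α ℝ μ
  smul_mem' c _ hf := hf.smul c

theorem convexOn_integral_abs :
    ConvexOn ℝ univ fun f : integrableSubmodule μ => ∫ x, |(f : α → ℝ) x| ∂μ := by
  refine ⟨convex_univ, fun f _ g _ a b ha hb _ => ?_⟩
  have hf : Integrable (f : α → ℝ) μ := f.2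
  have hg : Integrable (g : α → ℝ) μ := g.2
  calc ∫ x, |(↑(a • f + b • g) : α → ℝ) x| ∂μ
      ≤ ∫ x, (a * |(f : α → ℝ) x| + b * |(g : α → ℝ) x|) ∂μ := by
        refine integral_mono (a • f + b • g).2.abs
          ((hf.abs.const_mul a).add (hg.abs.const_mul b)) fun x => ?_
        simpa [abs_mul, abs_of_nonneg ha, abs_of_nonneg hb] using
          abs_add_le (a * (f : α → ℝ) x) (b * (g : α → ℝ) x)
    _ = a • ∫ x, |(f : α → ℝ) x| ∂μ + b • ∫ x, |(g : α → ℝ) x| ∂μ := by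
        rw [integral_add (hf.abs.const_mul a) (hg.abs.const_mul b), integral_const_mul,
          integral_const_mul, smul_eq_mul, smul_eq_mul]

variable {μ} in
theorem integral_abs_sum_mul_le {ι : Type*} {a : ι → α → ℝ} (ha : ∀ k, Integrable (a k) μ)
    {d : ι → ℝ} {X : ℝ} (A : Finset ι) (hd : ∀ k ∈ A, d k ∈ Icc (0 : ℝ) 1)
    (hX : ∀ C ⊆ A, ∫ x, |∑ k ∈ C, a k x| ∂μ ≤ X) :
    ∫ x, |∑ k ∈ A, d k * a k x| ∂μ ≤ X := by
  simpa [Finset.sum_apply] using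
    (convexOn_integral_abs μ).le_of_forall_subset_sum (fun k => ⟨a k, ha k⟩) A hd
      fun C hC => by simpa [Finset.sum_apply] using hX C hC

end IntegrableFunctions

theorem abs_intervalIntegral_le_setIntegral_abs {f : ℝ → ℝ} {a b t : ℝ}
    (hf : IntegrableOn f (Icc a b)) (ht : t ∈ Icc a b) :
    |∫ s in a..t, f s| ≤ ∫ s in Icc a b, |f s| :=
  calc |∫ s in a..t, f s| ≤ ∫ s in a..t, |f s| :=
        intervalIntegral.abs_integral_le_integral_abs ht.1
    _ = ∫ s in Ioc a t, |f s| := intervalIntegral.integral_of_le ht.1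
    _ ≤ ∫ s in Icc a b, |f s| :=
        setIntegral_mono_set hf.abs (ae_of_all _ fun _ => abs_nonneg _)
          (Ioc_subset_Icc_self.trans (Icc_subset_Icc_right ht.2)).eventuallyLE

theorem L1norm_le_of_ae_abs_le {f : ℝ → ℝ} {c : ℝ}
    (h : ∀ᵐ t ∂volume.restrict (Icc (0 : ℝ) 1), |f t| ≤ c) : L1norm f ≤ c :=
  (integral_mono_of_nonneg (ae_of_all _ fun _ => abs_nonneg _) (integrable_const c) h).trans_eq
    (by simp)

section Tint

variable {ι : Type*} (w : ι → ℝ → ℝ) (v : ℝ → ℝ) (A : Finset ι)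

theorem sum_Tint_sub_Tint {t : ℝ} (hw : ∀ k, IntervalIntegrable (w k) volume 0 t)
    (hv : IntervalIntegrable v volume 0 t) :
    ∑ k ∈ A, (Tint (w k) t - Tint v t) =
      (∫ s in 0..t, ∑ k ∈ A, w k s * (w k t - v t)) / 2 +
        v t * (∫ s in 0..t, ∑ k ∈ A, (w k s - v s)) / 2 := by
  rw [intervalIntegral.integral_finsetSum fun k _ => (hw k).mul_const _,
    intervalIntegral.integral_finsetSum fun k _ => (hw k).sub hv, Finset.sum_div,
    Finset.mul_sum, Finset.sum_div, ← Finset.sum_add_distrib]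
  refine Finset.sum_congr rfl fun k _ => ?_
  rw [intervalIntegral.integral_mul_const, intervalIntegral.integral_sub (hw k) hv]
  simp only [Tint]
  ring

variable {w v}

theorem abs_sum_Tint_sub_Tint_le (hw : ∀ k, IntegrableOn (w k) (Icc 0 1))
    (hv : IntegrableOn v (Icc 0 1)) {t : ℝ} (ht : t ∈ Icc (0 : ℝ) 1) (hvt : |v t| ≤ 1) :
    |∑ k ∈ A, (Tint (w k) t - Tint v t)| ≤
      (∫ s in Icc 0 1, |∑ k ∈ A, w k s * (w k t - v t)|) / 2 +
        L1norm (fun s => ∑ k ∈ A, (w k s - v s)) / 2 := by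
  have hIcc : Icc 0 t ⊆ Icc (0 : ℝ) 1 := Icc_subset_Icc_right ht.2
  have hw' k : IntervalIntegrable (w k) volume 0 t :=
    (intervalIntegrable_iff_integrableOn_Icc_of_le ht.1).2 ((hw k).mono_set hIcc)
  have hv' : IntervalIntegrable v volume 0 t :=
    (intervalIntegrable_iff_integrableOn_Icc_of_le ht.1).2 (hv.mono_set hIcc)
  have first := abs_intervalIntegral_le_setIntegral_abs
    (integrable_finsetSum A fun k _ => (hw k).mul_const (w k t - v t)) ht
  have second := abs_intervalIntegral_le_setIntegral_abs
    (integrable_finsetSum A fun k _ => (hw k).sub hv) ht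
  rw [sum_Tint_sub_Tint w v A hw' hv']
  refine (abs_add_le _ _).trans ?_
  rw [abs_div, abs_div, abs_mul, abs_two]
  gcongr
  calc |v t| * |∫ s in 0..t, ∑ k ∈ A, (w k s - v s)|
      ≤ 1 * L1norm (fun s => ∑ k ∈ A, (w k s - v s)) :=
        mul_le_mul hvt second (abs_nonneg _) zero_le_one
    _ = _ := one_mul _

theorem L1norm_sum_Tint_sub_Tint_le (hw : ∀ k, IntegrableOn (w k) (Icc 0 1))
    (hv : IntegrableOn v (Icc 0 1))
    (hw01 : ∀ k, ∀ᵐ s ∂volume.restrict (Icc (0 : ℝ) 1), w k s ∈ Icc (0 : ℝ) 1)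
    (hv1 : ∀ᵐ t ∂volume.restrict (Icc (0 : ℝ) 1), |v t| ≤ 1) {M : ℝ}
    (hM : ∀ C ⊆ A, L1norm (fun t => ∑ k ∈ C, (w k t - v t)) ≤ M) :
    L1norm (fun t => ∑ k ∈ A, (Tint (w k) t - Tint v t)) ≤ M := by
  set μ := volume.restrict (Icc (0 : ℝ) 1)
  set K : ℝ → ℝ → ℝ := fun t s => |∑ k ∈ A, w k s * (w k t - v t)|
  have hK : Integrable (Function.uncurry K) (μ.prod μ) := by
    refine (integrable_finsetSum A fun k _ => ((hw k).sub hv).mul_prod (hw k)).abs.congr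
      (ae_of_all _ fun p => ?_)
    simp [K, Function.uncurry, mul_comm]
  have hG : Integrable (fun t => ∫ s, K t s ∂μ) μ := hK.integral_prod_left
  have hKM : ∫ t, ∫ s, K t s ∂μ ∂μ ≤ M := by
    rw [integral_integral_swap hK]
    calc ∫ s, ∫ t, K t s ∂μ ∂μ ≤ ∫ _s, M ∂μ := by
          refine integral_mono_of_nonneg (ae_of_all _ fun s => ?_) (integrable_const M) ?_
          · exact integral_nonneg fun t => abs_nonneg _
          filter_upwards [(eventually_all_finset A).2 fun k _ => hw01 k] with s hs
          exact integral_abs_sum_mul_le (fun k => (hw k).sub hv) A hs hM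
      _ = M := by simp [μ]
  calc L1norm (fun t => ∑ k ∈ A, (Tint (w k) t - Tint v t))
      ≤ ∫ t, ((∫ s, K t s ∂μ) / 2 + M / 2) ∂μ := by
        refine integral_mono_of_nonneg (ae_of_all _ fun _ => abs_nonneg _)
          ((hG.div_const 2).add (integrable_const _)) ?_
        filter_upwards [ae_restrict_mem measurableSet_Icc, hv1] with t ht hvt
        refine (abs_sum_Tint_sub_Tint_le A hw hv ht hvt).trans ?_
        gcongr
        exact hM A subset_rfl
    _ = (∫ t, ∫ s, K t s ∂μ ∂μ) / 2 + M / 2 := by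
        rw [integral_add (hG.div_const 2) (integrable_const _), integral_div]
        simp [μ]
    _ ≤ M := by linarith

end Tint

section supSubsetsL1

variable {n : ℕ} {g : ℕ → ℝ → ℝ}

theorem le_supSubsetsL1 {C : Finset ℕ} (hC : C ⊆ Finset.Icc 1 n) :
    L1norm (fun t => ∑ k ∈ C, g k t) ≤ supSubsetsL1 n g :=
  Finset.le_sup' (fun C => L1norm fun t => ∑ k ∈ C, g k t) (Finset.mem_powerset.2 hC)

theorem supSubsetsL1_nonneg : 0 ≤ supSubsetsL1 n g :=
  (integral_nonneg fun _ => abs_nonneg _).trans (le_supSubsetsL1 (Finset.empty_subset _))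

theorem supSubsetsL1_le (hg : ∀ k, ∀ᵐ t ∂volume.restrict (Icc (0 : ℝ) 1), |g k t| ≤ 1) :
    supSubsetsL1 n g ≤ n := by
  refine Finset.sup'_le _ _ fun C hC => L1norm_le_of_ae_abs_le ?_
  have hcard : C.card ≤ n := by
    simpa using Finset.card_le_card (Finset.mem_powerset.1 hC)
  filter_upwards [(eventually_all_finset C).2 fun k _ => hg k] with t ht
  calc |∑ k ∈ C, g k t| ≤ ∑ k ∈ C, |g k t| := Finset.abs_sum_le_sum_abs _ _
    _ ≤ ∑ _k ∈ C, 1 := Finset.sum_le_sum ht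
    _ ≤ n := by simpa using hcard

end supSubsetsL1

theorem integrableOn_of_ae_mem_Icc {f : ℝ → ℝ} (hf : Measurable f)
    (h01 : ∀ᵐ t ∂volume.restrict (Icc (0 : ℝ) 1), f t ∈ Icc (0 : ℝ) 1) :
    IntegrableOn f (Icc 0 1) :=
  IntegrableOn.of_bound measure_Icc_lt_top hf.aestronglyMeasurable 1 <|
    h01.mono fun _ ht => by rw [Real.norm_eq_abs, abs_le]; constructor <;> linarith [ht.1, ht.2]

theorem abs_sub_le_one_of_mem_Icc {x y : ℝ} (hx : x ∈ Icc (0 : ℝ) 1) (hy : y ∈ Icc (0 : ℝ) 1) :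
    |x - y| ≤ 1 :=
  abs_sub_le_iff.2 ⟨by linarith [hx.2, hy.1], by linarith [hx.1, hy.2]⟩

theorem stmt_9 (u : ℕ → ℝ → ℝ) (v : ℝ → ℝ)
    (hu_meas : ∀ i, Measurable (u i)) (hv_meas : Measurable v)
    (hu_mem : ∀ i, ∀ᵐ t ∂(volume.restrict (Set.Icc (0 : ℝ) 1)),
      u i t ∈ Set.Icc (0 : ℝ) 1)
    (hv_mem : ∀ᵐ t ∂(volume.restrict (Set.Icc (0 : ℝ) 1)),
      v t ∈ Set.Icc (0 : ℝ) 1) :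
    (∀ n : ℕ, ∀ i : ℕ, ∀ A ∈ (Finset.Icc 1 n).powerset,
      L1norm (fun t => ∑ k ∈ A, (Tint (u (i + k)) t - Tint v t)) ≤
        supSubsetsL1 n (fun k t => u (i + k) t - v t)) ∧
    (∀ n : ℕ,
      limsup (fun i => supSubsetsL1 n (fun k t => Tint (u (i + k)) t - Tint v t))
          atTop ≤
        limsup (fun i => supSubsetsL1 n (fun k t => u (i + k) t - v t)) atTop) := by
  have hu_int i := integrableOn_of_ae_mem_Icc (hu_meas i) (hu_mem i)
  have hv_int := integrableOn_of_ae_mem_Icc hv_meas hv_mem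
  have pointwise : ∀ n i, ∀ A ∈ (Finset.Icc 1 n).powerset,
      L1norm (fun t => ∑ k ∈ A, (Tint (u (i + k)) t - Tint v t)) ≤
        supSubsetsL1 n (fun k t => u (i + k) t - v t) := fun n i A hA =>
    L1norm_sum_Tint_sub_Tint_le A (fun k => hu_int (i + k)) hv_int (fun k => hu_mem (i + k))
      (hv_mem.mono fun t ht => abs_le.2 ⟨by linarith [ht.1], ht.2⟩)
      fun C hC => le_supSubsetsL1 (hC.trans (Finset.mem_powerset.1 hA))
  refine ⟨pointwise, fun n => limsup_le_limsup
    (Eventually.of_forall fun i => Finset.sup'_le _ _ (pointwise n i))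
    (isBoundedUnder_of ⟨0, fun _ => supSubsetsL1_nonneg⟩).isCoboundedUnder_le
    (isBoundedUnder_of ⟨n, fun i => supSubsetsL1_le fun k => ?_⟩)⟩
  filter_upwards [hu_mem (i + k), hv_mem] with t hut hvt
  exact abs_sub_le_one_of_mem_Icc hut hvt
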